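/- Let ξ ∈ ℝ³ and let ψ, Φ : ℝ³ → ℝ be three times continuously differentiable. Assume that for every x ∈ ℝ³ the gradient ∇ψ(x) is parallel to ξ (i.e. ∇ψ(x) = (ξ·∇ψ(x)/|ξ|²) ξ, equivalently v·∇ψ(x) = 0 for all v ⟂ ξ) and that ξ·∇Φ(x) = 0 for every x ∈ ℝ³. Then the vector field V = ψ Φ ξ satisfies, at every point x, curl curl V = ψ (−ΔΦ) ξ + ∇ψ × curl(Φ ξ). In particular, the vector field W + W^{(c)}, where W := ψ (−ΔΦ) ξ and W^{(c)} := ∇ψ × curl(Φ ξ), is divergence-free: div(W + W^{(c)}) = 0 everywhere. -/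

import Mathlib

/-! With `g = ψΦ`, `curl curl (gξ) = ∇(ξ·∇g) − (Δg) ξ`. Since `ξ·∇Φ = 0`, `ξ·∇g = Φ (ξ·∇ψ)`.
Since `∇ψ ∥ ξ`, `∇ψ·∇Φ = 0`, and the Hessian of `ψ` vanishes on `ξ^⊥`; being symmetric, it
then maps `ξ` to `(Δψ) ξ`. Expanding `∇(Φ ξ·∇ψ)` and `Δ(ψΦ)` by the product rule, the terms
`Φ (Δψ) ξ` cancel and what is left, `(ξ·∇ψ) ∇Φ − ψ (ΔΦ) ξ`, is `ψ (−ΔΦ) ξ + ∇ψ × (∇Φ × ξ)` by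
the BAC–CAB rule. The second claim is then `div curl = 0`. -/

noncomputable section

open scoped BigOperators

/-- The `i`-th partial derivative of a scalar function on `ℝ³`. -/
def pd (i : Fin 3) (f : (Fin 3 → ℝ) → ℝ) (x : Fin 3 → ℝ) : ℝ :=
  fderiv ℝ f x (Pi.single i 1)

/-- The gradient of a scalar function on `ℝ³`. -/
def grad (f : (Fin 3 → ℝ) → ℝ) (x : Fin 3 → ℝ) : Fin 3 → ℝ :=
  fun i => pd i f x

/-- The Laplacian of a scalar function on `ℝ³`. -/
def lap (f : (Fin 3 → ℝ) → ℝ) (x : Fin 3 → ℝ) : ℝ :=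
  ∑ i, pd i (fun y => pd i f y) x

/-- The curl of a vector field on `ℝ³`. -/
def curl (F : (Fin 3 → ℝ) → (Fin 3 → ℝ)) (x : Fin 3 → ℝ) : Fin 3 → ℝ :=
  ![pd 1 (fun y => F y 2) x - pd 2 (fun y => F y 1) x,
    pd 2 (fun y => F y 0) x - pd 0 (fun y => F y 2) x,
    pd 0 (fun y => F y 1) x - pd 1 (fun y => F y 0) x]

/-- The divergence of a vector field on `ℝ³`. -/
def div3 (F : (Fin 3 → ℝ) → (Fin 3 → ℝ)) (x : Fin 3 → ℝ) : ℝ :=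
  ∑ i, pd i (fun y => F y i) x

/-- The cross product in `ℝ³`. -/
def cross3 (a b : Fin 3 → ℝ) : Fin 3 → ℝ :=
  ![a 1 * b 2 - a 2 * b 1, a 2 * b 0 - a 0 * b 2, a 0 * b 1 - a 1 * b 0]

open Matrix

section LinearAlgebra

variable {n K : Type*} [Fintype n] [Field K] [LinearOrder K] [IsStrictOrderedRing K]

lemma dotProduct_self_smul_eq_of_orthogonal {ξ u : n → K}
    (h : ∀ v, v ⬝ᵥ ξ = 0 → v ⬝ᵥ u = 0) : (ξ ⬝ᵥ ξ) • u = (ξ ⬝ᵥ u) • ξ := by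
  set w := (ξ ⬝ᵥ ξ) • u - (ξ ⬝ᵥ u) • ξ
  have hwξ : w ⬝ᵥ ξ = 0 := by
    simp only [w, sub_dotProduct, smul_dotProduct, smul_eq_mul, dotProduct_comm u ξ]
    ring
  have hww : w ⬝ᵥ w = 0 :=
    calc w ⬝ᵥ w = w ⬝ᵥ ((ξ ⬝ᵥ ξ) • u - (ξ ⬝ᵥ u) • ξ) := rfl
      _ = 0 := by simp [dotProduct_sub, dotProduct_smul, hwξ, h w hwξ]
  exact sub_eq_zero.mp (dotProduct_self_eq_zero.mp hww)

/-- A symmetric matrix vanishing on `ξ^⊥` is a multiple of `ξ ξᵀ`. -/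
lemma Matrix.IsSymm.mulVec_eq_trace_smul {H : Matrix n n K} (hH : H.IsSymm)
    {ξ : n → K} (h : ∀ v, v ⬝ᵥ ξ = 0 → H *ᵥ v = 0) : H *ᵥ ξ = H.trace • ξ := by
  by_cases hξ : ξ = 0
  · simp [hξ]
  have hs : ξ ⬝ᵥ ξ ≠ 0 := fun h0 => hξ (dotProduct_self_eq_zero.mp h0)
  have hrow : ∀ a b, (ξ ⬝ᵥ ξ) * H a b = (H *ᵥ ξ) a * ξ b := fun a b => by
    have := dotProduct_self_smul_eq_of_orthogonal (u := fun b => H a b)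
      fun v hv => by rw [dotProduct_comm]; exact congrFun (h v hv) a
    simpa [mulVec, dotProduct_comm ξ] using congrFun this b
  ext a
  apply mul_left_cancel₀ hs
  calc (ξ ⬝ᵥ ξ) * (H *ᵥ ξ) a = ∑ b, (ξ ⬝ᵥ ξ) * H b a * ξ b := by
        simp [mulVec, dotProduct, Finset.mul_sum, hH.apply, mul_assoc]
    _ = ∑ b, (ξ ⬝ᵥ ξ) * H b b * ξ a := by
        refine Finset.sum_congr rfl fun b _ => ?_
        rw [hrow, hrow]; ring
    _ = (ξ ⬝ᵥ ξ) * (H.trace • ξ) a := by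
        simp [trace, Finset.mul_sum, Finset.sum_mul, mul_assoc]

end LinearAlgebra

lemma cross3_cross3 (a b c : Fin 3 → ℝ) :
    cross3 a (cross3 b c) = (a ⬝ᵥ c) • b - (b ⬝ᵥ a) • c :=
  cross_cross_eq_smul_sub_smul' a b c

def hessian (f : (Fin 3 → ℝ) → ℝ) (x : Fin 3 → ℝ) : Matrix (Fin 3) (Fin 3) ℝ :=
  Matrix.of fun i j => pd i (pd j f) x

section Calculus

variable {f g : (Fin 3 → ℝ) → ℝ} {x : Fin 3 → ℝ}

lemma pd_const (c : ℝ) (i : Fin 3) : pd i (fun _ => c) x = 0 := by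
  simp [pd]

lemma pd_add (hf : DifferentiableAt ℝ f x) (hg : DifferentiableAt ℝ g x) (i : Fin 3) :
    pd i (fun y => f y + g y) x = pd i f x + pd i g x := by
  simp [pd, fderiv_fun_add hf hg]

lemma pd_sub (hf : DifferentiableAt ℝ f x) (hg : DifferentiableAt ℝ g x) (i : Fin 3) :
    pd i (fun y => f y - g y) x = pd i f x - pd i g x := by
  simp [pd, fderiv_fun_sub hf hg]

lemma pd_mul (hf : DifferentiableAt ℝ f x) (hg : DifferentiableAt ℝ g x) (i : Fin 3) :
    pd i (fun y => f y * g y) x = pd i f x * g x + f x * pd i g x := by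
  simp only [pd, fderiv_fun_mul hf hg, _root_.add_apply,
    _root_.smul_apply, smul_eq_mul]
  ring

lemma pd_mul_const (hf : DifferentiableAt ℝ f x) (c : ℝ) (i : Fin 3) :
    pd i (fun y => f y * c) x = pd i f x * c := by
  simp only [pd, fderiv_mul_const hf]
  simp [mul_comm]

lemma pd_dotProduct {F : (Fin 3 → ℝ) → Fin 3 → ℝ}
    (hF : ∀ j, DifferentiableAt ℝ (fun y => F y j) x) (v : Fin 3 → ℝ) (i : Fin 3) :
    pd i (fun y => v ⬝ᵥ F y) x = v ⬝ᵥ fun j => pd i (fun y => F y j) x := by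
  simp only [pd, dotProduct]
  rw [fderiv_fun_sum fun j _ => (hF j).const_mul (v j)]
  simp [fderiv_const_mul (hF _)]

lemma contDiff_pd {m n : WithTop ℕ∞} (hf : ContDiff ℝ n f) (hmn : m + 1 ≤ n) (i : Fin 3) :
    ContDiff ℝ m (pd i f) :=
  (hf.fderiv_right hmn).clm_apply contDiff_const

lemma pd_comm (hf : ContDiff ℝ 2 f) (i j : Fin 3) : pd i (pd j f) = pd j (pd i f) := by
  funext x
  have hd : DifferentiableAt ℝ (fderiv ℝ f) x :=
    (hf.fderiv_right (m := 1) (by norm_num)).differentiable (by norm_num) x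
  have hsecond : ∀ a b : Fin 3,
      pd a (pd b f) x = fderiv ℝ (fderiv ℝ f) x (Pi.single a 1) (Pi.single b 1) := by
    intro a b
    change fderiv ℝ (fun y => fderiv ℝ f y (Pi.single b 1)) x (Pi.single a 1) = _
    simp [fderiv_clm_apply hd (differentiableAt_const _)]
  rw [hsecond, hsecond, hf.contDiffAt.isSymmSndFDerivAt (by norm_num)]

lemma trace_hessian : (hessian f x).trace = lap f x := rfl

lemma hessian_isSymm (hf : ContDiff ℝ 2 f) : (hessian f x).IsSymm :=
  Matrix.ext fun i j => congrFun (pd_comm hf j i) x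

lemma differentiable_pd (hf : ContDiff ℝ 2 f) (i : Fin 3) : Differentiable ℝ (pd i f) :=
  (contDiff_pd hf (m := 1) (by norm_num) i).differentiable (by norm_num)

lemma grad_dotProduct_grad (hf : ContDiff ℝ 2 f) (v : Fin 3 → ℝ) :
    grad (fun y => v ⬝ᵥ grad f y) x = hessian f x *ᵥ v := by
  ext i
  rw [grad, pd_dotProduct (F := grad f) (fun j => differentiable_pd hf j x), dotProduct_comm]
  rfl

lemma differentiable_dotProduct_grad (hf : ContDiff ℝ 2 f) (v : Fin 3 → ℝ) :
    Differentiable ℝ fun y => v ⬝ᵥ grad f y := by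
  have hd := differentiable_pd hf
  simp only [dotProduct, grad]
  fun_prop

lemma grad_mul (hf : DifferentiableAt ℝ f x) (hg : DifferentiableAt ℝ g x) :
    grad (fun y => f y * g y) x = g x • grad f x + f x • grad g x := by
  ext i
  simp only [grad, pd_mul hf hg, Pi.add_apply, Pi.smul_apply, smul_eq_mul]
  ring

lemma lap_mul (hf : ContDiff ℝ 2 f) (hg : ContDiff ℝ 2 g) :
    lap (fun y => f y * g y) x =
      g x * lap f x + 2 * (grad f x ⬝ᵥ grad g x) + f x * lap g x := by
  have hf1 : Differentiable ℝ f := hf.differentiable (by norm_num)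
  have hg1 : Differentiable ℝ g := hg.differentiable (by norm_num)
  have hpd : ∀ i, pd i (fun y => f y * g y) = fun y => pd i f y * g y + f y * pd i g y :=
    fun i => funext fun y => pd_mul (hf1 y) (hg1 y) i
  simp only [lap, hpd, grad, dotProduct, Finset.mul_sum, ← Finset.sum_add_distrib]
  refine Finset.sum_congr rfl fun i _ => ?_
  have hfi := differentiable_pd hf i x
  have hgi := differentiable_pd hg i x
  rw [pd_add (hfi.fun_mul (hg1 x)) ((hf1 x).fun_mul hgi), pd_mul hfi (hg1 x), pd_mul (hf1 x) hgi]
  ring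

lemma curl_mul_const (hg : Differentiable ℝ g) (ξ : Fin 3 → ℝ) :
    curl (fun y j => g y * ξ j) = fun y => cross3 (grad g y) ξ := by
  funext y
  simp [curl, cross3, grad, pd_mul_const (hg y)]

lemma curl_curl_mul_const (hg : ContDiff ℝ 2 g) (ξ : Fin 3 → ℝ) :
    curl (curl fun y j => g y * ξ j) x =
      grad (fun y => ξ ⬝ᵥ grad g y) x - lap g x • ξ := by
  have hd := differentiable_pd hg
  rw [curl_mul_const (hg.differentiable (by norm_num)), grad_dotProduct_grad hg]
  ext i
  have hcomm : ∀ j, pd j (pd i g) x = pd i (pd j g) x := fun j => congrFun (pd_comm hg j i) x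
  fin_cases i <;>
    simp only [Fin.zero_eta, Fin.mk_one, Fin.reduceFinMk, Fin.isValue, curl, cross3, grad,
      cons_val, cons_val_one, cons_val_zero, hessian, lap, Fin.sum_univ_three, Pi.sub_apply,
      mulVec, dotProduct, of_apply, Pi.smul_apply, smul_eq_mul,
      pd_sub ((hd _ x).mul_const _) ((hd _ x).mul_const _), pd_mul_const (hd _ x)] at hcomm ⊢ <;>
    linear_combination ξ 0 * hcomm 0 + ξ 1 * hcomm 1 + ξ 2 * hcomm 2

lemma div3_curl {F : (Fin 3 → ℝ) → Fin 3 → ℝ} (hF : ∀ i, ContDiff ℝ 2 fun y => F y i) :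
    div3 (curl F) x = 0 := by
  have hd : ∀ i j, DifferentiableAt ℝ (pd j fun y => F y i) x :=
    fun i j => differentiable_pd (hF i) j x
  simp only [div3, curl, Fin.isValue, Fin.sum_univ_three, cons_val_zero, cons_val_one, cons_val,
    pd_sub (hd _ _) (hd _ _)]
  linear_combination congrFun (pd_comm (hF 2) 0 1) x + congrFun (pd_comm (hF 1) 2 0) x +
    congrFun (pd_comm (hF 0) 1 2) x

lemma contDiff_cross3_grad {n : WithTop ℕ∞} (hg : ContDiff ℝ (n + 1) g) (ξ : Fin 3 → ℝ)
    (i : Fin 3) : ContDiff ℝ n fun y => cross3 (grad g y) ξ i := by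
  have hd : ∀ j, ContDiff ℝ n (pd j g) := contDiff_pd hg le_rfl
  fin_cases i <;>
    simp only [cross3, grad, Fin.isValue, Fin.zero_eta, Fin.mk_one, Fin.reduceFinMk, cons_val,
      cons_val_zero, cons_val_one] <;>
    fun_prop

lemma grad_dotProduct_grad_eq_lap_smul (hf : ContDiff ℝ 2 f) {ξ : Fin 3 → ℝ}
    (hpar : ∀ y v, v ⬝ᵥ ξ = 0 → v ⬝ᵥ grad f y = 0) :
    grad (fun y => ξ ⬝ᵥ grad f y) x = lap f x • ξ := by
  rw [grad_dotProduct_grad hf, ← trace_hessian]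
  refine (hessian_isSymm hf).mulVec_eq_trace_smul fun v hv => ?_
  rw [← grad_dotProduct_grad hf, show (fun y => v ⬝ᵥ grad f y) = fun _ => 0 from
    funext fun y => hpar y v hv]
  ext i
  exact pd_const 0 i

end Calculus

lemma curl_curl_mul_mul_const {ψ Φ : (Fin 3 → ℝ) → ℝ} (hψ : ContDiff ℝ 2 ψ)
    (hΦ : ContDiff ℝ 2 Φ) {ξ : Fin 3 → ℝ} (hpar : ∀ y v, v ⬝ᵥ ξ = 0 → v ⬝ᵥ grad ψ y = 0)
    (hperp : ∀ y, ξ ⬝ᵥ grad Φ y = 0) (x : Fin 3 → ℝ) :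
    curl (curl fun z j => ψ z * Φ z * ξ j) x =
      (ψ x * -lap Φ x) • ξ + cross3 (grad ψ x) (curl (fun z j => Φ z * ξ j) x) := by
  have hψ1 : Differentiable ℝ ψ := hψ.differentiable (by norm_num)
  have hΦ1 : Differentiable ℝ Φ := hΦ.differentiable (by norm_num)
  have hdiv :
      (fun y => ξ ⬝ᵥ grad (fun z => ψ z * Φ z) y) = fun y => Φ y * (ξ ⬝ᵥ grad ψ y) :=
    funext fun y => by
      rw [grad_mul (hψ1 y) (hΦ1 y), dotProduct_add, dotProduct_smul, dotProduct_smul, hperp y]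
      simp
  have horth : grad Φ x ⬝ᵥ grad ψ x = 0 :=
    hpar x _ (by rw [dotProduct_comm]; exact hperp x)
  rw [curl_curl_mul_const (hψ.mul hΦ), hdiv,
    grad_mul (hΦ1 x) (differentiable_dotProduct_grad hψ ξ x),
    grad_dotProduct_grad_eq_lap_smul hψ hpar, lap_mul hψ hΦ, curl_mul_const hΦ1, cross3_cross3,
    dotProduct_comm (grad ψ x) ξ, dotProduct_comm (grad ψ x), horth]
  module

/-- **The incompressibility corrector identity for intermittent jets.** If `∇ψ` is
everywhere parallel to `ξ` (i.e. `v·∇ψ = 0` for all `v ⟂ ξ`) and `ξ·∇Φ = 0`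
everywhere, then `curl curl (ψΦξ) = ψ(−ΔΦ)ξ + ∇ψ × curl(Φξ)`; in particular
`W + W^{(c)}` with `W = ψ(−ΔΦ)ξ` and `W^{(c)} = ∇ψ × curl(Φξ)` is divergence-free. -/
theorem curl_curl_intermittent_jet
    (ξ : Fin 3 → ℝ) (ψ Φ : (Fin 3 → ℝ) → ℝ)
    (hψ : ContDiff ℝ 3 ψ) (hΦ : ContDiff ℝ 3 Φ)
    (hψpar : ∀ x : Fin 3 → ℝ, ∀ v : Fin 3 → ℝ,
      (∑ i, v i * ξ i) = 0 → (∑ i, v i * pd i ψ x) = 0)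
    (hΦperp : ∀ x : Fin 3 → ℝ, ∑ i, ξ i * pd i Φ x = 0) :
    (∀ x : Fin 3 → ℝ, ∀ i : Fin 3,
      curl (fun y => curl (fun z => fun j => ψ z * Φ z * ξ j) y) x i =
        ψ x * (-(lap Φ x)) * ξ i +
          cross3 (grad ψ x) (curl (fun z => fun j => Φ z * ξ j) x) i) ∧
    (∀ x : Fin 3 → ℝ,
      div3 (fun y => fun i =>
        ψ y * (-(lap Φ y)) * ξ i +
          cross3 (grad ψ y) (curl (fun z => fun j => Φ z * ξ j) y) i) x = 0) := by
  have hg : ContDiff ℝ 3 fun z => ψ z * Φ z := hψ.mul hΦ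
  have hcurl := curl_curl_mul_mul_const (hψ.of_le (by norm_num)) (hΦ.of_le (by norm_num))
    hψpar hΦperp
  refine ⟨fun x i => congrFun (hcurl x) i, fun x => ?_⟩
  have hF : ∀ i, ContDiff ℝ 2 fun y => curl (fun z j => ψ z * Φ z * ξ j) y i := by
    rw [curl_mul_const (hg.differentiable (by norm_num))]
    exact contDiff_cross3_grad hg ξ
  convert div3_curl (x := x) hF using 2
  funext y i
  exact (congrFun (hcurl y) i).symm
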